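/- Let P, Q, D be constant real n×n matrices with P and Q symmetric, P positive definite, and D positive definite in the sense that xᵀDx > 0 for every nonzero x ∈ ℝⁿ (D need not be symmetric). Let v : ℝ × ℝ → ℝⁿ be twice continuously differentiable, satisfy P·∂v/∂t + Q·∂v/∂x = D·∂²v/∂x² everywhere, and suppose v(a,t) = 0 and v(b,t) = 0 for all t, for some a < b. Then the energy E(t) = ∫ₐᵇ v(x,t)ᵀ·P·v(x,t) dx is a nonincreasing function of t. -/

import Mathlib

open Matrix MeasureTheory

theorem dot_symm' {n : ℕ} {M : Matrix (Fin n) (Fin n) ℝ} (hM : M.IsSymm)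
    (x y : Fin n → ℝ) : x ⬝ᵥ M.mulVec y = y ⬝ᵥ M.mulVec x := by
  rw [Matrix.dotProduct_mulVec, ← Matrix.mulVec_transpose, hM.eq, dotProduct_comm]

theorem cont_quad' {α : Type*} [TopologicalSpace α] {n : ℕ} (M : Matrix (Fin n) (Fin n) ℝ)
    {x y : α → Fin n → ℝ} (hx : Continuous x) (hy : Continuous y) :
    Continuous fun p => x p ⬝ᵥ M.mulVec (y p) := by
  simp only [dotProduct, Matrix.mulVec]
  exact continuous_finset_sum _ fun i _ =>
    ((continuous_apply i).comp hx).mul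
      (continuous_finset_sum _ fun j _ => continuous_const.mul ((continuous_apply j).comp hy))

theorem hasDerivAt_dot_mulVec' {n : ℕ} (M : Matrix (Fin n) (Fin n) ℝ)
    {f g : ℝ → Fin n → ℝ} {f' g' : Fin n → ℝ} {t : ℝ}
    (hf : HasDerivAt f f' t) (hg : HasDerivAt g g' t) :
    HasDerivAt (fun s => f s ⬝ᵥ M.mulVec (g s))
      (f' ⬝ᵥ M.mulVec (g t) + f t ⬝ᵥ M.mulVec g') t := by
  have hfi := hasDerivAt_pi.mp hf
  have hgi := hasDerivAt_pi.mp hg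
  have h : ∀ i ∈ Finset.univ, HasDerivAt (fun s => f s i * ∑ j, M i j * g s j)
      (f' i * (∑ j, M i j * g t j) + f t i * (∑ j, M i j * g' j)) t := fun i _ =>
    (hfi i).mul (HasDerivAt.fun_sum fun j _ => (hgi j).const_mul (M i j))
  have hsum := HasDerivAt.fun_sum h
  simp only [dotProduct, Matrix.mulVec, Finset.sum_add_distrib] at hsum ⊢
  exact hsum

/-- Decay of linear waves: if `P, Q` are constant real symmetric matrices with `P`
positive definite, `D` is a constant real positive definite matrix (`xᵀDx > 0` for all
nonzero `x`, symmetry not assumed), `v(x,t)` is a `C²` solution of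
`P ∂v/∂t + Q ∂v/∂x = D ∂²v/∂x²` vanishing at `x = a` and `x = b` for all `t`, then the
energy `E(t) = ∫ₐᵇ vᵀPv dx` is nonincreasing in `t`. -/
theorem linear_waves_energy_antitone
    (n : ℕ) (P Q D : Matrix (Fin n) (Fin n) ℝ)
    (hPsymm : P.IsSymm) (hQsymm : Q.IsSymm)
    (hP : ∀ x : Fin n → ℝ, x ≠ 0 → 0 < x ⬝ᵥ P.mulVec x)
    (hD : ∀ x : Fin n → ℝ, x ≠ 0 → 0 < x ⬝ᵥ D.mulVec x)
    (v : ℝ × ℝ → (Fin n → ℝ)) (hv : ContDiff ℝ 2 v)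
    (hpde : ∀ p : ℝ × ℝ,
      P.mulVec (fderiv ℝ v p ((0 : ℝ), (1 : ℝ)))
        + Q.mulVec (fderiv ℝ v p ((1 : ℝ), (0 : ℝ)))
      = D.mulVec (fderiv ℝ (fun q => fderiv ℝ v q ((1 : ℝ), (0 : ℝ))) p ((1 : ℝ), (0 : ℝ))))
    (a b : ℝ) (hab : a < b)
    (hva : ∀ t : ℝ, v (a, t) = 0) (hvb : ∀ t : ℝ, v (b, t) = 0) :
    Antitone (fun t : ℝ => ∫ x in a..b, (v (x, t)) ⬝ᵥ P.mulVec (v (x, t))) := by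
  classical
  set g : ℝ × ℝ → (Fin n → ℝ) := fun q => fderiv ℝ v q ((1:ℝ),(0:ℝ)) with hgdef
  set vt : ℝ × ℝ → (Fin n → ℝ) := fun p => fderiv ℝ v p ((0:ℝ),(1:ℝ)) with hvtdef
  have hvd : Differentiable ℝ v := hv.differentiable two_ne_zero
  have hfd : ContDiff ℝ 1 (fun p => fderiv ℝ v p) := hv.fderiv_right (by norm_num)
  have hgc1 : ContDiff ℝ 1 g :=
    (ContinuousLinearMap.apply ℝ (Fin n → ℝ) ((1:ℝ),(0:ℝ))).contDiff.comp hfd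
  have hgd : Differentiable ℝ g := hgc1.differentiable one_ne_zero
  set vxx : ℝ × ℝ → (Fin n → ℝ) := fun p => fderiv ℝ g p ((1:ℝ),(0:ℝ)) with hvxxdef
  have cv : Continuous v := hv.continuous
  have cvt : Continuous vt :=
    ((ContinuousLinearMap.apply ℝ (Fin n → ℝ) ((0:ℝ),(1:ℝ))).continuous).comp hfd.continuous
  have cvx : Continuous g := hgc1.continuous
  have cvxx : Continuous vxx :=
    ((ContinuousLinearMap.apply ℝ (Fin n → ℝ) ((1:ℝ),(0:ℝ))).continuous).comp
      (hgc1.continuous_fderiv one_ne_zero)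
  have hdx : ∀ x t : ℝ, HasDerivAt (fun x => v (x, t)) (g (x, t)) x := fun x t =>
    (hvd (x, t)).hasFDerivAt.comp_hasDerivAt x (HasDerivAt.prodMk (hasDerivAt_id x) (hasDerivAt_const x t))
  have hdt : ∀ x t : ℝ, HasDerivAt (fun t => v (x, t)) (vt (x, t)) t := fun x t =>
    (hvd (x, t)).hasFDerivAt.comp_hasDerivAt t (HasDerivAt.prodMk (hasDerivAt_const t x) (hasDerivAt_id t))
  have hdxx : ∀ x t : ℝ, HasDerivAt (fun x => g (x, t)) (vxx (x, t)) x := fun x t =>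
    (hgd (x, t)).hasFDerivAt.comp_hasDerivAt (f := fun x => (x, t)) x (HasDerivAt.prodMk (hasDerivAt_id x) (hasDerivAt_const x t))
  -- the time derivative of the energy
  have hE : ∀ t₀ : ℝ, HasDerivAt (fun t : ℝ => ∫ x in a..b, v (x, t) ⬝ᵥ P.mulVec (v (x, t)))
      (∫ x in a..b, (vt (x, t₀) ⬝ᵥ P.mulVec (v (x, t₀)) + v (x, t₀) ⬝ᵥ P.mulVec (vt (x, t₀)))) t₀ := by
    intro t₀
    have cF' : Continuous fun p : ℝ × ℝ =>
        vt p ⬝ᵥ P.mulVec (v p) + v p ⬝ᵥ P.mulVec (vt p) :=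
      (cont_quad' P cvt cv).add (cont_quad' P cv cvt)
    obtain ⟨C, hC⟩ := ((isCompact_uIcc (a := a) (b := b)).prod
        (isCompact_Icc (a := t₀ - 1) (b := t₀ + 1))).exists_bound_of_continuousOn
      cF'.continuousOn
    refine (intervalIntegral.hasDerivAt_integral_of_dominated_loc_of_deriv_le
      (F := fun t x => v (x, t) ⬝ᵥ P.mulVec (v (x, t)))
      (F' := fun t x => vt (x, t) ⬝ᵥ P.mulVec (v (x, t)) + v (x, t) ⬝ᵥ P.mulVec (vt (x, t)))
      (bound := fun _ => C) (s := Metric.ball t₀ 1) (Metric.ball_mem_nhds t₀ one_pos) ?_ ?_ ?_ ?_ ?_ ?_).2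
    · exact Filter.Eventually.of_forall fun t =>
        ((cont_quad' P cv cv).comp (continuous_id.prodMk (continuous_const (y := t)))
          |>.aestronglyMeasurable)
    · exact ((cont_quad' P cv cv).comp
        (continuous_id.prodMk (continuous_const (y := t₀)))).intervalIntegrable a b
    · exact (cF'.comp (continuous_id.prodMk (continuous_const (y := t₀)))).aestronglyMeasurable
    · refine Filter.Eventually.of_forall fun x hx s hs => ?_
      refine hC ((x, s)) ⟨Set.uIoc_subset_uIcc hx, ?_⟩
      have : s ∈ Set.Ioo (t₀ - 1) (t₀ + 1) := by rwa [Real.ball_eq_Ioo] at hs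
      exact Set.Ioo_subset_Icc_self this
    · exact intervalIntegrable_const
    · exact Filter.Eventually.of_forall fun x _ s _ =>
        hasDerivAt_dot_mulVec' P (hdt x s) (hdt x s)
  -- the derivative value is nonpositive
  have hle : ∀ t : ℝ,
      (∫ x in a..b, (vt (x, t) ⬝ᵥ P.mulVec (v (x, t)) + v (x, t) ⬝ᵥ P.mulVec (vt (x, t)))) ≤ 0 := by
    intro t
    set W : ℝ → ℝ := fun x =>
      2 * (v (x, t) ⬝ᵥ D.mulVec (g (x, t))) - v (x, t) ⬝ᵥ Q.mulVec (v (x, t)) with hWdef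
    have hW : ∀ x : ℝ, HasDerivAt W
        (2 * (g (x, t) ⬝ᵥ D.mulVec (g (x, t)))
          + (vt (x, t) ⬝ᵥ P.mulVec (v (x, t)) + v (x, t) ⬝ᵥ P.mulVec (vt (x, t)))) x := by
      intro x
      have h1 := (hasDerivAt_dot_mulVec' D (hdx x t) (hdxx x t)).const_mul (2 : ℝ)
      have h2 := hasDerivAt_dot_mulVec' Q (hdx x t) (hdx x t)
      have h12 := h1.sub h2
      convert h12 using 1
      · rfl
      · rfl
      · rfl
      have hDvxx : D.mulVec (vxx (x, t)) = P.mulVec (vt (x, t)) + Q.mulVec (g (x, t)) :=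
        (hpde (x, t)).symm
      rw [hDvxx, dotProduct_add, dot_symm' hPsymm (vt (x, t)) (v (x, t)),
        dot_symm' hQsymm (g (x, t)) (v (x, t))]
      ring
    have hcA : Continuous fun x : ℝ => 2 * (g (x, t) ⬝ᵥ D.mulVec (g (x, t))) :=
      continuous_const.mul ((cont_quad' D cvx cvx).comp
        (continuous_id.prodMk (continuous_const (y := t))))
    have hcB : Continuous fun x : ℝ =>
        vt (x, t) ⬝ᵥ P.mulVec (v (x, t)) + v (x, t) ⬝ᵥ P.mulVec (vt (x, t)) :=
      ((cont_quad' P cvt cv).add (cont_quad' P cv cvt)).comp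
        (continuous_id.prodMk (continuous_const (y := t)))
    have hftc : (∫ x in a..b,
        (2 * (g (x, t) ⬝ᵥ D.mulVec (g (x, t)))
          + (vt (x, t) ⬝ᵥ P.mulVec (v (x, t)) + v (x, t) ⬝ᵥ P.mulVec (vt (x, t)))))
        = W b - W a :=
      intervalIntegral.integral_eq_sub_of_hasDerivAt (fun x _ => hW x)
        ((hcA.add hcB).intervalIntegrable a b)
    have hWa : W a = 0 := by simp [hWdef, hva t]
    have hWb : W b = 0 := by simp [hWdef, hvb t]
    have hsplit : (∫ x in a..b,
        (2 * (g (x, t) ⬝ᵥ D.mulVec (g (x, t)))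
          + (vt (x, t) ⬝ᵥ P.mulVec (v (x, t)) + v (x, t) ⬝ᵥ P.mulVec (vt (x, t)))))
        = (∫ x in a..b, 2 * (g (x, t) ⬝ᵥ D.mulVec (g (x, t))))
          + ∫ x in a..b, (vt (x, t) ⬝ᵥ P.mulVec (v (x, t)) + v (x, t) ⬝ᵥ P.mulVec (vt (x, t))) :=
      intervalIntegral.integral_add (hcA.intervalIntegrable a b) (hcB.intervalIntegrable a b)
    have hApos : (0 : ℝ) ≤ ∫ x in a..b, 2 * (g (x, t) ⬝ᵥ D.mulVec (g (x, t))) := by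
      refine intervalIntegral.integral_nonneg hab.le fun x _ => ?_
      rcases eq_or_ne (g (x, t)) 0 with h | h
      · simp [h]
      · have := hD _ h
        linarith
    have h0 : (∫ x in a..b, 2 * (g (x, t) ⬝ᵥ D.mulVec (g (x, t))))
          + (∫ x in a..b, (vt (x, t) ⬝ᵥ P.mulVec (v (x, t)) + v (x, t) ⬝ᵥ P.mulVec (vt (x, t))))
        = 0 := by rw [← hsplit, hftc, hWa, hWb]; ring
    linarith
  exact antitone_of_deriv_nonpos (fun t => (hE t).differentiableAt)
    (fun t => by rw [(hE t).deriv]; exact hle t)
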